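/- The stabilizer Σ_r^+ of the point θ₁[k] − v_det in the affine Weyl group Σ_r ⋉ (k+r)Λ (acting as above) is generated by the simple transpositions s_{i,i+1} for 1 ≤ i ≤ r−2 together with the affine reflection α^{r-1,r} ∘ s_{r-1,r} (translation by (k+r)α^{r-1,r} composed with the transposition s_{r-1,r}), and this subgroup is isomorphic to the symmetric group Σ_r. -/

import Mathlib

/-! The stabilizer of `θ₁[k] − v` is the conjugate of the finite Weyl group `Σ_r` (dot action)
by the translation by `(k+r)e_r`: the map `σ ↦ (λ ↦ σ.λ + (k+r)(σ e_r − e_r))` is an injective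
group homomorphism `Σ_r → Σ_r ⋉ (k+r)Λ` whose image is exactly the stabilizer, because an
element of the affine Weyl group is determined by `σ` and one fixed point when `k+r ≠ 0`. It
sends `s_{i,i+1}` to itself for `i ≤ r−2` and `s_{r-1,r}` to `α^{r-1,r} ∘ s_{r-1,r}`, and
adjacent transpositions generate `Σ_r`. -/

/-- Half-sum of positive roots: `ρ = (r−1, r−3, ..., 1−r)/2`. -/
noncomputable def rhoVec (r : ℕ) : Fin r → ℝ := fun i => ((r : ℝ) - 1 - 2 * (i : ℝ)) / 2

/-- The affine Weyl transformation `λ ↦ σ(λ+ρ+v) − ρ − v + (k+r)γ` as a permutation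
of `ℝ^r` (a bijection: first translate by `ρ+v`, then permute coordinates by `σ`,
then translate by `−(ρ+v) + (k+r)γ`). -/
noncomputable def affEquiv (r k : ℕ) (ρ v : Fin r → ℝ) (σ : Equiv.Perm (Fin r))
    (γ : Fin r → ℝ) : Equiv.Perm (Fin r → ℝ) :=
  (Equiv.addRight (ρ + v)).trans
    ((Equiv.piCongrLeft' (fun _ : Fin r => ℝ) σ).trans
      (Equiv.addRight (-(ρ + v) + ((k : ℝ) + r) • γ)))

/-- The special point `θ₁[k] = (k+r)(1,...,1)/r − (k+r)x_r − ρ`. -/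
noncomputable def thetaPlus (r k : ℕ) : Fin r → ℝ :=
  fun i => ((k : ℝ) + r) / r - (if (i : ℕ) = r - 1 then (k : ℝ) + r else 0) - rhoVec r i

/-- The coroot `α^{i,j} = e_i − e_j` as a real vector. -/
noncomputable def alphaVec (r : ℕ) (i j : Fin r) : Fin r → ℝ :=
  fun m => (if m = i then (1 : ℝ) else 0) - (if m = j then (1 : ℝ) else 0)

/-- The generators: the simple transpositions `s_{i,i+1}` for `1 ≤ i ≤ r−2` and the
affine reflection `α^{r-1,r} ∘ s_{r-1,r}` (translation by `(k+r)α^{r-1,r}` composed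
with the transposition `s_{r-1,r}`). -/
def genSet (r k : ℕ) (v : Fin r → ℝ) : Set (Equiv.Perm (Fin r → ℝ)) :=
  {e | ∃ i j : Fin r, (j : ℕ) = (i : ℕ) + 1 ∧ (j : ℕ) < r - 1 ∧
      e = affEquiv r k (rhoVec r) v (Equiv.swap i j) 0} ∪
  {e | ∃ i j : Fin r, (i : ℕ) = r - 2 ∧ (j : ℕ) = r - 1 ∧
      e = affEquiv r k (rhoVec r) v (Equiv.swap i j) (alphaVec r i j)}

/-- The stabilizer `Σ_r^+` of `θ₁[k] − v_det` inside the affine Weyl group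
`Σ_r ⋉ (k+r)Λ`, as a set of permutations of `ℝ^r`. -/
def stabPlusSet (r k : ℕ) (v : Fin r → ℝ) : Set (Equiv.Perm (Fin r → ℝ)) :=
  {e | (∃ σ : Equiv.Perm (Fin r), ∃ γ : Fin r → ℤ, (∑ i, γ i) = 0 ∧
      e = affEquiv r k (rhoVec r) v σ (fun i => (γ i : ℝ))) ∧
    e (thetaPlus r k - v) = thetaPlus r k - v}

section AffEquiv

variable {r k : ℕ} {ρ v : Fin r → ℝ}

lemma affEquiv_apply (σ : Equiv.Perm (Fin r)) (γ x : Fin r → ℝ) (i : Fin r) :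
    affEquiv r k ρ v σ γ x i =
      x (σ⁻¹ i) + ρ (σ⁻¹ i) + v (σ⁻¹ i) - ρ i - v i + ((k : ℝ) + r) * γ i := by
  simp [affEquiv, Equiv.piCongrLeft', Equiv.Perm.inv_def]
  ring

lemma affEquiv_apply_sub_affEquiv_apply (σ : Equiv.Perm (Fin r)) (γ δ x : Fin r → ℝ) :
    affEquiv r k ρ v σ γ x - affEquiv r k ρ v σ δ x = ((k : ℝ) + r) • (γ - δ) := by
  funext i
  simp only [Pi.sub_apply, Pi.smul_apply, smul_eq_mul, affEquiv_apply]
  ring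

lemma eq_of_affEquiv_apply_eq (hkr : (k : ℝ) + r ≠ 0) {σ : Equiv.Perm (Fin r)}
    {γ δ x : Fin r → ℝ} (h : affEquiv r k ρ v σ γ x = affEquiv r k ρ v σ δ x) : γ = δ := by
  have hsub := affEquiv_apply_sub_affEquiv_apply (k := k) (ρ := ρ) (v := v) σ γ δ x
  rw [h, sub_self, eq_comm, smul_eq_zero] at hsub
  exact sub_eq_zero.mp (hsub.resolve_left hkr)

lemma affEquiv_apply_sub_affEquiv_apply_zero (σ : Equiv.Perm (Fin r)) (γ x : Fin r → ℝ) :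
    affEquiv r k ρ v σ γ x - affEquiv r k ρ v σ γ 0 = fun i => x (σ⁻¹ i) := by
  funext i
  simp only [Pi.sub_apply, Pi.zero_apply, affEquiv_apply]
  ring

lemma eq_one_of_affEquiv_eq_one {σ : Equiv.Perm (Fin r)} {γ : Fin r → ℝ}
    (h : affEquiv r k ρ v σ γ = 1) : σ = 1 := by
  refine Equiv.ext fun j => ?_
  have hj := congrFun
    (affEquiv_apply_sub_affEquiv_apply_zero (k := k) (ρ := ρ) (v := v) σ γ (Pi.single j 1)) (σ j)
  rw [h] at hj
  simpa [Pi.single_apply] using hj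

end AffEquiv

def adjacentSwaps (r : ℕ) : Set (Equiv.Perm (Fin r)) :=
  {σ | ∃ i j : Fin r, (j : ℕ) = (i : ℕ) + 1 ∧ σ = Equiv.swap i j}

lemma closure_adjacentSwaps (r : ℕ) : Subgroup.closure (adjacentSwaps r) = ⊤ := by
  cases r with
  | zero => exact Subsingleton.elim _ _
  | succ n =>
    rw [eq_top_iff, ← Subgroup.closure_eq_top_of_mclosure_eq_top
      (Equiv.Perm.mclosure_swap_castSucc_succ n)]
    refine Subgroup.closure_mono ?_
    rintro _ ⟨i, rfl⟩
    exact ⟨i.castSucc, i.succ, rfl, rfl⟩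

section Stabilizer

variable (r k : ℕ) (v : Fin r → ℝ)

/-- `σ e_r − e_r`, where `e_r` is the basis vector of index `r - 1`. -/
def stabShift (σ : Equiv.Perm (Fin r)) : Fin r → ℤ :=
  fun i => (if ((σ⁻¹ i : Fin r) : ℕ) = r - 1 then 1 else 0) - (if (i : ℕ) = r - 1 then 1 else 0)

lemma stabShift_sum (σ : Equiv.Perm (Fin r)) : ∑ i, stabShift r σ i = 0 := by
  simp only [stabShift, Finset.sum_sub_distrib]
  rw [Equiv.sum_comp σ⁻¹ (fun j : Fin r => if (j : ℕ) = r - 1 then (1 : ℤ) else 0), sub_self]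

noncomputable def stabHom : Equiv.Perm (Fin r) →* Equiv.Perm (Fin r → ℝ) where
  toFun σ := affEquiv r k (rhoVec r) v σ (fun i => (stabShift r σ i : ℝ))
  map_one' := by
    ext x i
    simp [affEquiv_apply, stabShift]
    ring
  map_mul' σ τ := by
    ext x i
    simp only [Equiv.Perm.mul_apply, affEquiv_apply, stabShift, mul_inv_rev]
    push_cast
    ring

lemma stabHom_apply (σ : Equiv.Perm (Fin r)) :
    stabHom r k v σ = affEquiv r k (rhoVec r) v σ (fun i => (stabShift r σ i : ℝ)) :=
  rfl

lemma stabHom_apply_thetaPlus_sub (σ : Equiv.Perm (Fin r)) :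
    stabHom r k v σ (thetaPlus r k - v) = thetaPlus r k - v := by
  funext i
  simp only [stabHom_apply, affEquiv_apply, Pi.sub_apply, thetaPlus, stabShift, rhoVec]
  split_ifs <;> push_cast <;> ring

lemma stabHom_injective : Function.Injective (stabHom r k v) :=
  (injective_iff_map_eq_one _).mpr fun _ => eq_one_of_affEquiv_eq_one

lemma stabPlusSet_eq_range (hkr : (k : ℝ) + r ≠ 0) :
    stabPlusSet r k v = Set.range (stabHom r k v) := by
  ext e
  constructor
  · rintro ⟨⟨σ, γ, -, rfl⟩, hfix⟩
    refine ⟨σ, ?_⟩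
    have hshift := eq_of_affEquiv_apply_eq hkr
      ((stabHom_apply_thetaPlus_sub r k v σ).trans hfix.symm)
    rw [stabHom_apply, hshift]
  · rintro ⟨σ, rfl⟩
    exact ⟨⟨σ, stabShift r σ, stabShift_sum r σ, rfl⟩, stabHom_apply_thetaPlus_sub r k v σ⟩

lemma stabHom_swap_of_lt {i j : Fin r} (hi : (i : ℕ) < r - 1) (hj : (j : ℕ) < r - 1) :
    stabHom r k v (Equiv.swap i j) = affEquiv r k (rhoVec r) v (Equiv.swap i j) 0 := by
  rw [stabHom_apply]
  congr 1
  funext m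
  simp only [stabShift, Equiv.swap_inv, Equiv.swap_apply_def, Pi.zero_apply]
  split_ifs <;> simp_all

lemma stabHom_swap_of_eq {i j : Fin r} (hj : (j : ℕ) = r - 1) :
    stabHom r k v (Equiv.swap i j) =
      affEquiv r k (rhoVec r) v (Equiv.swap i j) (alphaVec r i j) := by
  rw [stabHom_apply]
  congr 1
  funext m
  simp only [stabShift, alphaVec, Equiv.swap_inv, Equiv.swap_apply_def]
  split_ifs <;> simp_all [Fin.ext_iff]

lemma genSet_eq_image (hr : 2 ≤ r) : genSet r k v = stabHom r k v '' adjacentSwaps r := by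
  ext e
  constructor
  · rintro (⟨i, j, hij, hj, rfl⟩ | ⟨i, j, hi, hj, rfl⟩)
    · exact ⟨_, ⟨i, j, hij, rfl⟩, stabHom_swap_of_lt r k v (by omega) hj⟩
    · exact ⟨_, ⟨i, j, by omega, rfl⟩, stabHom_swap_of_eq r k v hj⟩
  · rintro ⟨_, ⟨i, j, hij, rfl⟩, rfl⟩
    rcases (show (j : ℕ) < r - 1 ∨ (j : ℕ) = r - 1 by omega) with hj | hj
    · rw [stabHom_swap_of_lt r k v (by omega) hj]
      exact Or.inl ⟨i, j, hij, hj, rfl⟩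
    · rw [stabHom_swap_of_eq r k v hj]
      exact Or.inr ⟨i, j, by omega, hj, rfl⟩

end Stabilizer

theorem stmt6_general (r k : ℕ) (hr : 2 ≤ r) (v : Fin r → ℝ) :
    Subgroup.closure (genSet r k v) = Subgroup.closure (stabPlusSet r k v) ∧
    Nonempty (↥(Subgroup.closure (genSet r k v)) ≃* Equiv.Perm (Fin r)) := by
  have hkr : (k : ℝ) + r ≠ 0 := by positivity
  have hgen : Subgroup.closure (genSet r k v) = (stabHom r k v).range := by
    rw [genSet_eq_image r k v hr, ← MonoidHom.map_closure, closure_adjacentSwaps,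
      ← MonoidHom.range_eq_map]
  have hstab : Subgroup.closure (stabPlusSet r k v) = (stabHom r k v).range := by
    rw [stabPlusSet_eq_range r k v hkr, ← MonoidHom.coe_range, Subgroup.closure_eq]
  exact ⟨hgen.trans hstab.symm,
    ⟨(MulEquiv.subgroupCongr hgen).trans (MonoidHom.ofInjective (stabHom_injective r k v)).symm⟩⟩

/-- the stabilizer `Σ_r^+` of `θ₁[k] − v_det` in the affine Weyl group is
generated by the simple transpositions `s_{i,i+1}`, `1 ≤ i ≤ r−2`, together with the
affine reflection `α^{r-1,r} ∘ s_{r-1,r}`, and this subgroup is isomorphic to the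
symmetric group `Σ_r`. -/
theorem stmt6 (r k : ℕ) (hr : 2 ≤ r) (hk : 0 < k) (v : Fin r → ℝ) (hv : ∑ i, v i = 0) :
    Subgroup.closure (genSet r k v) = Subgroup.closure (stabPlusSet r k v) ∧
    Nonempty (↥(Subgroup.closure (genSet r k v)) ≃* Equiv.Perm (Fin r)) :=
  stmt6_general r k hr v
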